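/- arXiv:2001.01444 — 3 statements merged into one kernel-verified Lean document; each statement's English description precedes it below -/
import Mathlib

section
/- Let f be a C^2 function near (x,y). The curve t ↦ (x + v sin t + u(1-cos t), y - u sin t + v(1-cos t), z + a sin t + b(1-cos t)) has contact of order 2 with the graph of f at t = 0 if and only if z = f(x,y), a = f_x v - f_y u, and b = f_x u + f_y v + f_xx v² - 2 f_xy u v + f_yy u², where all partial derivatives are evaluated at (x,y). -/
/-!
Write the curve as `γ(t) = p + sin t • w₁ + (1 - cos t) • w₂` with `p = (x, y)`, `w₁ = (v, -u)`,
`w₂ = (u, v)`, and the height likewise as `z + sin t • a + (1 - cos t) • b`; this family of curves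
is closed under differentiation. For `g` twice differentiable at `0`, L'Hôpital gives
`g t / t² → g''(0) / 2` once `g(0) = g'(0) = 0`, so `g t / t² → 0` iff `g(0) = g'(0) = g''(0) = 0`.
For `g(t) = height(t) - f(γ(t))` the chain rule gives `g'(0) = a - Df(w₁)` and
`g''(0) = b - D²f(w₁, w₁) - Df(w₂)`; expanding in coordinates, with the symmetry of `D²f`,
yields the stated formulas.
-/

open Real Set Filter

noncomputable def pdx (f : ℝ → ℝ → ℝ) : ℝ → ℝ → ℝ := fun x y => deriv (fun s => f s y) x
noncomputable def pdy (f : ℝ → ℝ → ℝ) : ℝ → ℝ → ℝ := fun x y => deriv (fun s => f x s) y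

open Topology Function

section SecondOrderVanishing

variable {g g' : ℝ → ℝ} {g'' : ℝ}

theorem tendsto_div_sq_of_hasDerivAt (hg : ∀ᶠ t in 𝓝 0, HasDerivAt g (g' t) t)
    (hg' : HasDerivAt g' g'' 0) (h0 : g 0 = 0) (h1 : g' 0 = 0) :
    Tendsto (fun t => g t / t ^ 2) (𝓝[≠] 0) (𝓝 (g'' / 2)) := by
  have hslope : Tendsto (fun t => g' t / (2 * t)) (𝓝[≠] 0) (𝓝 (g'' / 2)) := by
    refine ((hasDerivAt_iff_tendsto_slope.1 hg').div_const 2).congr fun t => ?_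
    simp only [slope_def_field, h1, sub_zero]
    ring
  refine HasDerivAt.lhopital_zero_nhdsNE (eventually_nhdsWithin_of_eventually_nhds hg)
    (Eventually.of_forall fun t => by simpa using hasDerivAt_pow 2 t) ?_ ?_ ?_ hslope
  · filter_upwards [self_mem_nhdsWithin] with t (ht : t ≠ 0)
    exact mul_ne_zero two_ne_zero ht
  · simpa [h0] using hg.self_of_nhds.continuousAt.tendsto.mono_left nhdsWithin_le_nhds
  · simpa using ((continuous_pow 2).tendsto (0 : ℝ)).mono_left nhdsWithin_le_nhds

theorem tendsto_div_sq_nhdsNE_zero_iff (hg : ∀ᶠ t in 𝓝 0, HasDerivAt g (g' t) t)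
    (hg' : HasDerivAt g' g'' 0) :
    Tendsto (fun t => g t / t ^ 2) (𝓝[≠] 0) (𝓝 0) ↔ g 0 = 0 ∧ g' 0 = 0 ∧ g'' = 0 := by
  refine ⟨fun H => ?_, fun ⟨h0, h1, h2⟩ => by
    simpa [h2] using tendsto_div_sq_of_hasDerivAt hg hg' h0 h1⟩
  have hid : Tendsto (fun t : ℝ => t) (𝓝[≠] 0) (𝓝 0) := tendsto_nhdsWithin_of_tendsto_nhds
    tendsto_id
  have h0 : g 0 = 0 := by
    have H' : Tendsto (fun t => g t / t ^ 2 * t ^ 2) (𝓝[≠] 0) (𝓝 0) := by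
      simpa using H.mul (hid.pow 2)
    refine tendsto_nhds_unique
      (hg.self_of_nhds.continuousAt.tendsto.mono_left nhdsWithin_le_nhds) (H'.congr' ?_)
    filter_upwards [self_mem_nhdsWithin] with t (ht : t ≠ 0)
    field_simp [ht]
  have h1 : g' 0 = 0 := by
    have H' : Tendsto (fun t => g t / t ^ 2 * t) (𝓝[≠] 0) (𝓝 0) := by
      simpa using H.mul hid
    refine tendsto_nhds_unique (hasDerivAt_iff_tendsto_slope.1 hg.self_of_nhds) (H'.congr' ?_)
    filter_upwards [self_mem_nhdsWithin] with t (ht : t ≠ 0)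
    rw [slope_def_field, h0, sub_zero, sub_zero]
    field_simp [ht]
  have h2 : g'' / 2 = 0 := tendsto_nhds_unique (tendsto_div_sq_of_hasDerivAt hg hg' h0 h1) H
  exact ⟨h0, h1, by linarith⟩

end SecondOrderVanishing

section Conic

variable {E : Type*} [NormedAddCommGroup E] [NormedSpace ℝ E]

noncomputable def conic (p w₁ w₂ : E) (t : ℝ) : E := p + sin t • w₁ + (1 - cos t) • w₂

@[simp]
theorem conic_zero (p w₁ w₂ : E) : conic p w₁ w₂ 0 = p := by
  simp [conic]

theorem hasDerivAt_conic (p w₁ w₂ : E) (t : ℝ) :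
    HasDerivAt (conic p w₁ w₂) (conic w₁ w₂ (-w₁) t) t := by
  have h := (((hasDerivAt_sin t).smul_const w₁).const_add p).add
    (((hasDerivAt_cos t).const_sub 1).smul_const w₂)
  refine h.congr_deriv ?_
  simp only [conic, sub_smul, one_smul, smul_neg, neg_neg]
  abel

theorem hasDerivAt_conic_sub_comp_conic {F : E → ℝ} {z a b : ℝ} {p w₁ w₂ : E} {t : ℝ}
    (hF : DifferentiableAt ℝ F (conic p w₁ w₂ t)) :
    HasDerivAt (fun t => conic z a b t - F (conic p w₁ w₂ t))
      (conic a b (-a) t - fderiv ℝ F (conic p w₁ w₂ t) (conic w₁ w₂ (-w₁) t)) t :=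
  (hasDerivAt_conic z a b t).sub (hF.hasFDerivAt.comp_hasDerivAt t (hasDerivAt_conic p w₁ w₂ t))

theorem hasDerivAt_conic_sub_fderiv_conic_zero {F : E → ℝ} {Q : E →L[ℝ] E →L[ℝ] ℝ}
    {a b : ℝ} {p w₁ w₂ : E} (hQ : HasFDerivAt (fderiv ℝ F) Q p) :
    HasDerivAt (fun t => conic a b (-a) t - fderiv ℝ F (conic p w₁ w₂ t) (conic w₁ w₂ (-w₁) t))
      (b - (Q w₁ w₁ + fderiv ℝ F p w₂)) 0 := by
  have hQ' : HasFDerivAt (fderiv ℝ F) Q (conic p w₁ w₂ 0) := by rwa [conic_zero]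
  have h := (hasDerivAt_conic a b (-a) 0).sub
    ((hQ'.comp_hasDerivAt 0 (hasDerivAt_conic p w₁ w₂ 0)).clm_apply
      (hasDerivAt_conic w₁ w₂ (-w₁) 0))
  refine h.congr_deriv ?_
  simp

theorem HasDerivAt.of_eventually_eq_fderiv_apply {F : E → ℝ} {Q : E →L[ℝ] E →L[ℝ] ℝ}
    {φ : ℝ → ℝ} {ℓ : ℝ → E} {e w : E} {s : ℝ} (hφ : ∀ᶠ r in 𝓝 s, φ r = fderiv ℝ F (ℓ r) w) (hQ : HasFDerivAt (fderiv ℝ F) Q (ℓ s))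
    (hℓ : HasDerivAt ℓ e s) : HasDerivAt φ (Q e w) s := by
  have h := (hQ.comp_hasDerivAt s hℓ).clm_apply (hasDerivAt_const s w)
  simp only [map_zero, add_zero, Function.comp_def] at h
  exact h.congr_of_eventuallyEq hφ

end Conic

section Partials

theorem ContinuousLinearMap.apply_prod_eq {M : Type*} [AddCommGroup M] [Module ℝ M]
    [TopologicalSpace M] (T : ℝ × ℝ →L[ℝ] M) (p q : ℝ) :
    T (p, q) = p • T (1, 0) + q • T (0, 1) := by
  rw [← map_smul, ← map_smul, ← map_add]
  simp

variable {f : ℝ → ℝ → ℝ} {x y : ℝ}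

theorem pdx_eq_fderiv (hf : DifferentiableAt ℝ (uncurry f) (x, y)) :
    pdx f x y = fderiv ℝ (uncurry f) (x, y) (1, 0) := by
  exact (hf.hasFDerivAt.comp_hasDerivAt x ((hasDerivAt_id x).prodMk (hasDerivAt_const x y))).deriv

theorem pdy_eq_fderiv (hf : DifferentiableAt ℝ (uncurry f) (x, y)) :
    pdy f x y = fderiv ℝ (uncurry f) (x, y) (0, 1) := by
  exact (hf.hasFDerivAt.comp_hasDerivAt y ((hasDerivAt_const y x).prodMk (hasDerivAt_id y))).deriv

variable {Q : ℝ × ℝ →L[ℝ] ℝ × ℝ →L[ℝ] ℝ}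
  (hf : ∀ᶠ q in 𝓝 (x, y), DifferentiableAt ℝ (uncurry f) q)
  (hQ : HasFDerivAt (fderiv ℝ (uncurry f)) Q (x, y))
include hf hQ

theorem pdx_pdx_eq : pdx (pdx f) x y = Q (1, 0) (1, 0) := by
  refine (HasDerivAt.of_eventually_eq_fderiv_apply (ℓ := fun s => (s, y)) ?_ hQ
    ((hasDerivAt_id x).prodMk (hasDerivAt_const x y))).deriv
  exact ((continuous_id.prodMk continuous_const).tendsto' x (x, y) rfl).eventually
    (hf.mono fun q hq => pdx_eq_fderiv hq)

theorem pdy_pdx_eq : pdy (pdx f) x y = Q (0, 1) (1, 0) := by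
  refine (HasDerivAt.of_eventually_eq_fderiv_apply (ℓ := fun s => (x, s)) ?_ hQ
    ((hasDerivAt_const y x).prodMk (hasDerivAt_id y))).deriv
  exact ((continuous_const.prodMk continuous_id).tendsto' y (x, y) rfl).eventually
    (hf.mono fun q hq => pdx_eq_fderiv hq)

theorem pdy_pdy_eq : pdy (pdy f) x y = Q (0, 1) (0, 1) := by
  refine (HasDerivAt.of_eventually_eq_fderiv_apply (ℓ := fun s => (x, s)) ?_ hQ
    ((hasDerivAt_const y x).prodMk (hasDerivAt_id y))).deriv
  exact ((continuous_const.prodMk continuous_id).tendsto' y (x, y) rfl).eventually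
    (hf.mono fun q hq => pdy_eq_fderiv hq)

end Partials

theorem stmt_8_general (f : ℝ → ℝ → ℝ) (x y z a b u v : ℝ)
    (hf : ContDiffAt ℝ 2 (fun p : ℝ × ℝ => f p.1 p.2) (x, y)) :
    Tendsto (fun t : ℝ =>
        (z + a * Real.sin t + b * (1 - Real.cos t)
          - f (x + v * Real.sin t + u * (1 - Real.cos t))
              (y - u * Real.sin t + v * (1 - Real.cos t))) / t ^ 2)
      (nhdsWithin 0 {(0 : ℝ)}ᶜ) (nhds 0)
    ↔ (z = f x y ∧
        a = pdx f x y * v - pdy f x y * u ∧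
        b = pdx f x y * u + pdy f x y * v
            + pdx (pdx f) x y * v ^ 2 - 2 * pdy (pdx f) x y * u * v
            + pdy (pdy f) x y * u ^ 2) := by
  change ContDiffAt ℝ 2 (uncurry f) (x, y) at hf
  set Q := fderiv ℝ (fderiv ℝ (uncurry f)) (x, y)
  have hdiff : ∀ᶠ q in 𝓝 (x, y), DifferentiableAt ℝ (uncurry f) q :=
    (hf.eventually (by simp)).mono fun q hq => hq.differentiableAt (by simp)
  have hQ : HasFDerivAt (fderiv ℝ (uncurry f)) Q (x, y) :=
    ((hf.fderiv_right (m := 1) le_rfl).differentiableAt one_ne_zero).hasFDerivAt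
  have hsymm : Q (1, 0) (0, 1) = Q (0, 1) (1, 0) := hf.isSymmSndFDerivAt (by simp) _ _
  have hcurve (t : ℝ) : z + a * sin t + b * (1 - cos t)
      - f (x + v * sin t + u * (1 - cos t)) (y - u * sin t + v * (1 - cos t))
      = conic z a b t - uncurry f (conic (x, y) (v, -u) (u, v) t) := by
    simp only [conic, uncurry, Prod.smul_mk, Prod.mk_add_mk, smul_eq_mul]
    ring_nf
  have hnear : ∀ᶠ t in 𝓝 0, DifferentiableAt ℝ (uncurry f) (conic (x, y) (v, -u) (u, v) t) :=
    (hasDerivAt_conic (x, y) (v, -u) (u, v) 0).continuousAt.tendsto.eventually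
      (by rwa [conic_zero])
  simp only [hcurve]
  rw [tendsto_div_sq_nhdsNE_zero_iff (hnear.mono fun t => hasDerivAt_conic_sub_comp_conic)
    (hasDerivAt_conic_sub_fderiv_conic_zero hQ), pdx_pdx_eq hdiff hQ, pdy_pdx_eq hdiff hQ,
    pdy_pdy_eq hdiff hQ, pdx_eq_fderiv hdiff.self_of_nhds, pdy_eq_fderiv hdiff.self_of_nhds]
  set L := fderiv ℝ (uncurry f) (x, y)
  simp only [conic_zero, uncurry_apply_pair]
  rw [L.apply_prod_eq v (-u), L.apply_prod_eq u v, Q.apply_prod_eq v (-u)]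
  simp only [add_apply, smul_apply, (Q _).apply_prod_eq v (-u), hsymm, smul_eq_mul]
  refine and_congr sub_eq_zero (and_congr ?_ ?_) <;> rw [sub_eq_zero] <;>
    exact Eq.congr_right (by ring)

/-- the conic has second order contact with the graph of `f` at `t = 0`
iff `z = f`, `a = f_x v - f_y u` and `b = f_x u + f_y v + f_xx v² - 2 f_xy uv + f_yy u²`. -/
theorem stmt_8 (f : ℝ → ℝ → ℝ) (x y z a b u v : ℝ)
    (hf : ContDiffAt ℝ 2 (fun p : ℝ × ℝ => f p.1 p.2) (x, y))
    (huv : (u, v) ≠ ((0 : ℝ), (0 : ℝ))) :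
    Tendsto (fun t : ℝ =>
        (z + a * Real.sin t + b * (1 - Real.cos t)
          - f (x + v * Real.sin t + u * (1 - Real.cos t))
              (y - u * Real.sin t + v * (1 - Real.cos t))) / t ^ 2)
      (nhdsWithin 0 {(0 : ℝ)}ᶜ) (nhds 0)
    ↔ (z = f x y ∧
        a = pdx f x y * v - pdy f x y * u ∧
        b = pdx f x y * u + pdy f x y * v
            + pdx (pdx f) x y * v ^ 2 - 2 * pdy (pdx f) x y * u * v
            + pdy (pdy f) x y * u ^ 2) :=
  stmt_8_general f x y z a b u v hf
end

section
/- Let f be C^4 near (x,y) and suppose the curve t ↦ (x + v sin t + u(1-cos t), y - u sin t + v(1-cos t), z + a sin t + b(1-cos t)) has contact of order 3 with the graph of f at t = 0. Then it has contact of order 4 if and only if f_xxxx v⁴ - 4 f_xxxy v³u + 6 f_xxyy v²u² - 4 f_xyyy vu³ + f_yyyy u⁴ + 6uv² f_xxx + 6v(v²-2u²) f_xxy + 6u(u²-2v²) f_xyy + 6u²v f_yyy + 3(u²-v²)(f_xx - f_yy) + 12 uv f_xy = 0 at (x,y). -/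
open Real Set Filter

/-!
Along the curve `γ` of the statement the velocity `(A, B)` turns at unit angular speed,
`A' = -B`, `B' = A`. Hence each derivative of `t ↦ f (γ t)` is a fixed polynomial in `A`, `B`
and the partial derivatives of `f` at `γ t`, once Schwarz's theorem has brought every mixed
partial to the normal form `∂ʲ_y ∂ⁱ_x f`. The third-order contact conditions say exactly that
the defect `g t = z + a sin t + b (1 - cos t) - f (γ t)` vanishes at `0` together with `g'`,
`g''`, `g'''`, so by L'Hôpital's rule `g t / t⁴ → g⁗ 0 / 24`, and `g⁗ 0` is minus the
fourth-order expression.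
-/

open Function Topology

section PartialDerivatives

variable {f g : ℝ → ℝ → ℝ} {U : Set (ℝ × ℝ)} {p : ℝ × ℝ}

theorem uncurry_pdx_eq_fderiv (hg : DifferentiableAt ℝ (uncurry g) p) :
    uncurry (pdx g) p = fderiv ℝ (uncurry g) p (1, 0) :=
  (hg.hasFDerivAt.comp_hasDerivAt (x := p.1) (f := fun s => (s, p.2))
    ((hasDerivAt_id p.1).prodMk (hasDerivAt_const p.1 p.2))).deriv

theorem uncurry_pdy_eq_fderiv (hg : DifferentiableAt ℝ (uncurry g) p) :
    uncurry (pdy g) p = fderiv ℝ (uncurry g) p (0, 1) :=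
  (hg.hasFDerivAt.comp_hasDerivAt (x := p.2) (f := fun s => (p.1, s))
    ((hasDerivAt_const p.2 p.1).prodMk (hasDerivAt_id p.2))).deriv

theorem hasDerivAt_uncurry_comp {γ : ℝ → ℝ × ℝ} {γ' : ℝ × ℝ} {t : ℝ}
    (hg : DifferentiableAt ℝ (uncurry g) (γ t)) (hγ : HasDerivAt γ γ' t) :
    HasDerivAt (fun s => uncurry g (γ s))
      (uncurry (pdx g) (γ t) * γ'.1 + uncurry (pdy g) (γ t) * γ'.2) t := by
  have h := hg.hasFDerivAt.comp_hasDerivAt t hγ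
  have hsplit : γ' = γ'.1 • ((1 : ℝ), (0 : ℝ)) + γ'.2 • ((0 : ℝ), (1 : ℝ)) := by
    ext <;> simp
  rwa [hsplit, map_add, map_smul, map_smul, smul_eq_mul, smul_eq_mul,
    ← uncurry_pdx_eq_fderiv hg, ← uncurry_pdy_eq_fderiv hg, mul_comm, mul_comm γ'.2] at h

theorem ContDiffOn.uncurry_pdx {m n : WithTop ℕ∞} (hU : IsOpen U)
    (hg : ContDiffOn ℝ n (uncurry g) U) (hmn : m + 1 ≤ n) :
    ContDiffOn ℝ m (uncurry (pdx g)) U :=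
  ((hg.fderiv_of_isOpen hU hmn).clm_apply contDiffOn_const).congr fun _ hq =>
    uncurry_pdx_eq_fderiv ((hg.differentiableOn (by rintro rfl; simp at hmn)).differentiableAt
      (hU.mem_nhds hq))

theorem ContDiffOn.uncurry_pdy {m n : WithTop ℕ∞} (hU : IsOpen U)
    (hg : ContDiffOn ℝ n (uncurry g) U) (hmn : m + 1 ≤ n) :
    ContDiffOn ℝ m (uncurry (pdy g)) U :=
  ((hg.fderiv_of_isOpen hU hmn).clm_apply contDiffOn_const).congr fun _ hq =>
    uncurry_pdy_eq_fderiv ((hg.differentiableOn (by rintro rfl; simp at hmn)).differentiableAt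
      (hU.mem_nhds hq))

theorem ContDiffOn.uncurry_iterate_pdx (hU : IsOpen U) {n : ℕ} :
    ∀ {k : ℕ} {g : ℝ → ℝ → ℝ}, ContDiffOn ℝ (n + k : ℕ) (uncurry g) U →
      ContDiffOn ℝ n (uncurry (pdx^[k] g)) U
  | 0, _, hg => hg
  | k + 1, g, hg => uncurry_iterate_pdx hU (k := k) (g := pdx g)
    (hg.uncurry_pdx hU (by push_cast; rw [add_assoc]))

theorem ContDiffOn.uncurry_iterate_pdy (hU : IsOpen U) {n : ℕ} :
    ∀ {k : ℕ} {g : ℝ → ℝ → ℝ}, ContDiffOn ℝ (n + k : ℕ) (uncurry g) U →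
      ContDiffOn ℝ n (uncurry (pdy^[k] g)) U
  | 0, _, hg => hg
  | k + 1, g, hg => uncurry_iterate_pdy hU (k := k) (g := pdy g)
    (hg.uncurry_pdy hU (by push_cast; rw [add_assoc]))

theorem pdx_pdy_comm (hU : IsOpen U) (hg : ContDiffOn ℝ 2 (uncurry g) U) (hp : p ∈ U) :
    uncurry (pdx (pdy g)) p = uncurry (pdy (pdx g)) p := by
  have hG : ContDiffOn ℝ 1 (fderiv ℝ (uncurry g)) U := hg.fderiv_of_isOpen hU (by norm_num)
  have hG' : DifferentiableAt ℝ (fderiv ℝ (uncurry g)) p :=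
    (hG.differentiableOn one_ne_zero).differentiableAt (hU.mem_nhds hp)
  have hg' : ∀ q ∈ U, DifferentiableAt ℝ (uncurry g) q := fun q hq =>
    (hg.differentiableOn (by norm_num)).differentiableAt (hU.mem_nhds hq)
  have hsymm := (hg.contDiffAt (hU.mem_nhds hp)).isSymmSndFDerivAt (by simp)
  have second : ∀ v w : ℝ × ℝ, fderiv ℝ (fun q => fderiv ℝ (uncurry g) q w) p v
      = fderiv ℝ (fderiv ℝ (uncurry g)) p v w := fun v w => by
    rw [fderiv_clm_apply hG' (differentiableAt_const w)]
    simp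
  have hx : uncurry (pdx g) =ᶠ[𝓝 p] fun q => fderiv ℝ (uncurry g) q (1, 0) :=
    eventually_of_mem (hU.mem_nhds hp) fun q hq => uncurry_pdx_eq_fderiv (hg' q hq)
  have hy : uncurry (pdy g) =ᶠ[𝓝 p] fun q => fderiv ℝ (uncurry g) q (0, 1) :=
    eventually_of_mem (hU.mem_nhds hp) fun q hq => uncurry_pdy_eq_fderiv (hg' q hq)
  rw [uncurry_pdx_eq_fderiv, uncurry_pdy_eq_fderiv, hx.fderiv_eq, hy.fderiv_eq, second, second,
    hsymm]
  · exact ((hg.uncurry_pdx hU (by norm_num : (1 : WithTop ℕ∞) + 1 ≤ 2)).differentiableOn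
      one_ne_zero).differentiableAt (hU.mem_nhds hp)
  · exact ((hg.uncurry_pdy hU (by norm_num : (1 : WithTop ℕ∞) + 1 ≤ 2)).differentiableOn
      one_ne_zero).differentiableAt (hU.mem_nhds hp)

theorem Set.EqOn.uncurry_pdy {g₁ g₂ : ℝ → ℝ → ℝ} (hU : IsOpen U)
    (h : EqOn (uncurry g₁) (uncurry g₂) U) : EqOn (uncurry (pdy g₁)) (uncurry (pdy g₂)) U :=
  fun _ hq => Filter.EventuallyEq.deriv_eq <| eventually_of_mem
    ((continuous_const.prodMk continuous_id).continuousAt.preimage_mem_nhds (hU.mem_nhds hq))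
    fun _ hs => h hs

theorem eqOn_pdx_iterate_pdy (hU : IsOpen U) :
    ∀ (j : ℕ) {g : ℝ → ℝ → ℝ}, ContDiffOn ℝ (j + 1 : ℕ) (uncurry g) U →
      EqOn (uncurry (pdx (pdy^[j] g))) (uncurry (pdy^[j] (pdx g))) U
  | 0, _, _ => fun _ _ => rfl
  | j + 1, g, hg => by
    have hj : ContDiffOn ℝ 2 (uncurry (pdy^[j] g)) U :=
      ContDiffOn.uncurry_iterate_pdy (n := 2) hU (by rwa [add_comm 2 j])
    intro q hq
    rw [iterate_succ_apply', iterate_succ_apply', pdx_pdy_comm hU hj hq]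
    exact (eqOn_pdx_iterate_pdy hU j (hg.of_le (by norm_cast; omega))).uncurry_pdy hU hq

noncomputable def pd (i j : ℕ) (f : ℝ → ℝ → ℝ) : ℝ × ℝ → ℝ := uncurry (pdy^[j] (pdx^[i] f))

theorem pd_apply (i j : ℕ) (f : ℝ → ℝ → ℝ) (x y : ℝ) :
    pd i j f (x, y) = pdy^[j] (pdx^[i] f) x y :=
  rfl

theorem ContDiffOn.pd (hU : IsOpen U) {m i j : ℕ}
    (hf : ContDiffOn ℝ (m + i + j : ℕ) (uncurry f) U) :
    ContDiffOn ℝ m (pd i j f) U :=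
  uncurry_iterate_pdy hU (uncurry_iterate_pdx hU (by rwa [add_right_comm]))

theorem hasDerivAt_pd_comp (hU : IsOpen U) {n i j : ℕ} (hf : ContDiffOn ℝ n (uncurry f) U)
    (hij : i + j + 1 ≤ n) {γ : ℝ → ℝ × ℝ} {A B t : ℝ} (hγ : HasDerivAt γ (A, B) t)
    (ht : γ t ∈ U) :
    HasDerivAt (fun s => pd i j f (γ s))
      (pd (i + 1) j f (γ t) * A + pd i (j + 1) f (γ t) * B) t := by
  have hpd : ContDiffOn ℝ (1 : ℕ) (pd i j f) U := (hf.of_le (by norm_cast; omega)).pd hU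
  have h := hasDerivAt_uncurry_comp
    ((hpd.differentiableOn one_ne_zero).differentiableAt (hU.mem_nhds ht)) hγ
  have hswap := eqOn_pdx_iterate_pdy hU j (g := pdx^[i] f)
    ((hf.of_le (by norm_cast; omega)).uncurry_iterate_pdx hU (n := j + 1) (k := i))
  rwa [hswap ht, ← iterate_succ_apply' pdx, ← iterate_succ_apply' pdy] at h

end PartialDerivatives

section Circle

variable (f : ℝ → ℝ → ℝ) (p : ℝ × ℝ) (A B : ℝ)

/- `circleDerivₖ f p A B` is the `k`-th derivative of `t ↦ f (γ t)` at a time where `γ = p` and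
`γ' = (A, B)`, for any curve whose velocity satisfies `A' = -B`, `B' = A`. -/
noncomputable def circleDeriv1 : ℝ :=
  pd 1 0 f p * A + pd 0 1 f p * B

noncomputable def circleDeriv2 : ℝ :=
  pd 2 0 f p * A ^ 2 + 2 * pd 1 1 f p * A * B + pd 0 2 f p * B ^ 2 - pd 1 0 f p * B
    + pd 0 1 f p * A

noncomputable def circleDeriv3 : ℝ :=
  pd 3 0 f p * A ^ 3 + 3 * pd 2 1 f p * A ^ 2 * B + 3 * pd 1 2 f p * A * B ^ 2
    + pd 0 3 f p * B ^ 3 + 3 * (pd 0 2 f p - pd 2 0 f p) * A * B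
    + 3 * pd 1 1 f p * (A ^ 2 - B ^ 2) - pd 1 0 f p * A - pd 0 1 f p * B

noncomputable def circleDeriv4 : ℝ :=
  pd 4 0 f p * A ^ 4 + 4 * pd 3 1 f p * A ^ 3 * B + 6 * pd 2 2 f p * A ^ 2 * B ^ 2
    + 4 * pd 1 3 f p * A * B ^ 3 + pd 0 4 f p * B ^ 4 - 6 * pd 3 0 f p * A ^ 2 * B
    + 6 * pd 2 1 f p * (A ^ 3 - 2 * A * B ^ 2) + 6 * pd 1 2 f p * (2 * A ^ 2 * B - B ^ 3)
    + 6 * pd 0 3 f p * A * B ^ 2 + pd 2 0 f p * (3 * B ^ 2 - 4 * A ^ 2)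
    + pd 0 2 f p * (3 * A ^ 2 - 4 * B ^ 2) - 14 * pd 1 1 f p * A * B + pd 1 0 f p * B
    - pd 0 1 f p * A

variable {f} {U : Set (ℝ × ℝ)} {γ : ℝ → ℝ × ℝ} {A B : ℝ → ℝ} {t : ℝ}

theorem hasDerivAt_circleDeriv1 (hU : IsOpen U) (hf : ContDiffOn ℝ (4 : ℕ) (uncurry f) U)
    (hγ : HasDerivAt γ (A t, B t) t) (hA : HasDerivAt A (-B t) t) (hB : HasDerivAt B (A t) t)
    (ht : γ t ∈ U) :
    HasDerivAt (fun s => circleDeriv1 f (γ s) (A s) (B s))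
      (circleDeriv2 f (γ t) (A t) (B t)) t := by
  have d (i j : ℕ) (hij : i + j ≤ 3 := by norm_num) :=
    hasDerivAt_pd_comp hU hf (by omega : i + j + 1 ≤ 4) hγ ht
  exact (((d 1 0).mul hA).add ((d 0 1).mul hB)).congr_deriv (by unfold circleDeriv2; ring)

theorem hasDerivAt_circleDeriv2 (hU : IsOpen U) (hf : ContDiffOn ℝ (4 : ℕ) (uncurry f) U)
    (hγ : HasDerivAt γ (A t, B t) t) (hA : HasDerivAt A (-B t) t) (hB : HasDerivAt B (A t) t)
    (ht : γ t ∈ U) :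
    HasDerivAt (fun s => circleDeriv2 f (γ s) (A s) (B s))
      (circleDeriv3 f (γ t) (A t) (B t)) t := by
  have d (i j : ℕ) (hij : i + j ≤ 3 := by norm_num) :=
    hasDerivAt_pd_comp hU hf (by omega : i + j + 1 ≤ 4) hγ ht
  exact (((((d 2 0).mul (hA.pow 2)).add ((((d 1 1).const_mul 2).mul hA).mul hB)).add
    ((d 0 2).mul (hB.pow 2))).sub ((d 1 0).mul hB) |>.add ((d 0 1).mul hA)).congr_deriv
    (by unfold circleDeriv3; simp only [Pi.mul_apply, Pi.pow_apply]; ring)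

theorem hasDerivAt_circleDeriv3 (hU : IsOpen U) (hf : ContDiffOn ℝ (4 : ℕ) (uncurry f) U)
    (hγ : HasDerivAt γ (A t, B t) t) (hA : HasDerivAt A (-B t) t) (hB : HasDerivAt B (A t) t)
    (ht : γ t ∈ U) :
    HasDerivAt (fun s => circleDeriv3 f (γ s) (A s) (B s))
      (circleDeriv4 f (γ t) (A t) (B t)) t := by
  have d (i j : ℕ) (hij : i + j ≤ 3 := by norm_num) :=
    hasDerivAt_pd_comp hU hf (by omega : i + j + 1 ≤ 4) hγ ht
  have cubic := ((((d 3 0).mul (hA.pow 3)).add ((((d 2 1).const_mul 3).mul (hA.pow 2)).mul hB)).add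
    ((((d 1 2).const_mul 3).mul hA).mul (hB.pow 2))).add ((d 0 3).mul (hB.pow 3))
  exact (((((cubic.add (((((d 0 2).sub (d 2 0)).const_mul 3).mul hA).mul hB)).add
    (((d 1 1).const_mul 3).mul ((hA.pow 2).sub (hB.pow 2)))).sub ((d 1 0).mul hA)).sub
    ((d 0 1).mul hB))).congr_deriv
    (by unfold circleDeriv4; simp only [Pi.mul_apply, Pi.pow_apply, Pi.sub_apply]; ring)

end Circle

theorem tendsto_div_pow_succ_of_hasDerivAt {g g' : ℝ → ℝ} {n : ℕ} {L : ℝ}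
    (hg : ∀ᶠ t in 𝓝 0, HasDerivAt g (g' t) t) (hg0 : g 0 = 0)
    (hlim : Tendsto (fun t => g' t / t ^ n) (𝓝[≠] 0) (𝓝 L)) :
    Tendsto (fun t => g t / t ^ (n + 1)) (𝓝[≠] 0) (𝓝 (L / (n + 1))) := by
  refine HasDerivAt.lhopital_zero_nhdsNE (eventually_nhdsWithin_of_eventually_nhds hg)
    (.of_forall fun t => (hasDerivAt_pow (n + 1) t)) ?_ ?_ ?_ ?_
  · filter_upwards [self_mem_nhdsWithin] with t (ht : t ≠ 0)
    exact mul_ne_zero (by positivity) (pow_ne_zero n ht)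
  · simpa [hg0] using hg.self_of_nhds.continuousAt.tendsto.mono_left nhdsWithin_le_nhds
  · simpa using ((continuous_pow (n + 1)).tendsto' (0 : ℝ) 0 (by simp)).mono_left
      nhdsWithin_le_nhds
  · refine (hlim.div_const (n + 1)).congr' ?_
    filter_upwards [self_mem_nhdsWithin] with t ht
    push_cast
    field_simp

theorem tendsto_div_pow_four_of_hasDerivAt {g g₁ g₂ g₃ : ℝ → ℝ} {L : ℝ}
    (hg : ∀ᶠ t in 𝓝 0, HasDerivAt g (g₁ t) t) (hg₁ : ∀ᶠ t in 𝓝 0, HasDerivAt g₁ (g₂ t) t)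
    (hg₂ : ∀ᶠ t in 𝓝 0, HasDerivAt g₂ (g₃ t) t) (hg₃ : HasDerivAt g₃ L 0)
    (h0 : g 0 = 0) (h₁0 : g₁ 0 = 0) (h₂0 : g₂ 0 = 0) (h₃0 : g₃ 0 = 0) :
    Tendsto (fun t => g t / t ^ 4) (𝓝[≠] 0) (𝓝 (L / 24)) := by
  have lim₃ : Tendsto (fun t => g₃ t / t ^ 1) (𝓝[≠] 0) (𝓝 L) := by
    refine (hasDerivAt_iff_tendsto_slope.1 hg₃).congr fun t => ?_
    simp [slope_def_field, h₃0]
  have lim₂ := tendsto_div_pow_succ_of_hasDerivAt hg₂ h₂0 lim₃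
  have lim₁ := tendsto_div_pow_succ_of_hasDerivAt hg₁ h₁0 lim₂
  have lim := tendsto_div_pow_succ_of_hasDerivAt hg h0 lim₁
  convert lim using 2
  norm_num
  ring

theorem tendsto_conic_contact_div_pow_four {f : ℝ → ℝ → ℝ} {U : Set (ℝ × ℝ)}
    {x y z a b u v : ℝ} (hU : IsOpen U) (hf : ContDiffOn ℝ (4 : ℕ) (uncurry f) U)
    (hxy : (x, y) ∈ U) (hz : z = f x y) (ha : a = circleDeriv1 f (x, y) v (-u))
    (hb : b = circleDeriv2 f (x, y) v (-u)) (h3 : -a = circleDeriv3 f (x, y) v (-u)) :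
    Tendsto (fun t => (z + a * sin t + b * (1 - cos t)
        - f (x + v * sin t + u * (1 - cos t)) (y - u * sin t + v * (1 - cos t))) / t ^ 4)
      (𝓝[≠] 0) (𝓝 (-(b + circleDeriv4 f (x, y) v (-u)) / 24)) := by
  set γ : ℝ → ℝ × ℝ :=
    fun t => (x + v * sin t + u * (1 - cos t), y - u * sin t + v * (1 - cos t))
  set A : ℝ → ℝ := fun t => v * cos t + u * sin t
  set B : ℝ → ℝ := fun t => v * sin t - u * cos t
  have hγ (t : ℝ) : HasDerivAt γ (A t, B t) t := by
    refine .prodMk ?_ ?_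
    · exact ((((hasDerivAt_sin t).const_mul v).const_add x).add
        (((hasDerivAt_cos t).const_sub 1).const_mul u)).congr_deriv (by ring)
    · exact ((((hasDerivAt_sin t).const_mul u).const_sub y).add
        (((hasDerivAt_cos t).const_sub 1).const_mul v)).congr_deriv (by ring)
  have hA (t : ℝ) : HasDerivAt A (-B t) t :=
    (((hasDerivAt_cos t).const_mul v).add ((hasDerivAt_sin t).const_mul u)).congr_deriv (by ring)
  have hB (t : ℝ) : HasDerivAt B (A t) t :=
    (((hasDerivAt_sin t).const_mul v).sub ((hasDerivAt_cos t).const_mul u)).congr_deriv (by ring)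
  have hγ0 : γ 0 = (x, y) := by simp [γ]
  have hT : ∀ᶠ t in 𝓝 0, γ t ∈ U :=
    (continuous_iff_continuousAt.1 (by fun_prop) 0).preimage_mem_nhds
      (by rw [hγ0]; exact hU.mem_nhds hxy)
  refine tendsto_div_pow_four_of_hasDerivAt
    (g₁ := fun t => a * cos t + b * sin t - circleDeriv1 f (γ t) (A t) (B t))
    (g₂ := fun t => b * cos t - a * sin t - circleDeriv2 f (γ t) (A t) (B t))
    (g₃ := fun t => -(a * cos t) - b * sin t - circleDeriv3 f (γ t) (A t) (B t))
    ?_ ?_ ?_ ?_ ?_ ?_ ?_ ?_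
  · filter_upwards [hT] with t ht
    exact ((((hasDerivAt_sin t).const_mul a).const_add z).add
      (((hasDerivAt_cos t).const_sub 1).const_mul b)).sub
      (hasDerivAt_pd_comp hU hf (i := 0) (j := 0) (by norm_num) (hγ t) ht) |>.congr_deriv
      (by rw [circleDeriv1]; ring)
  · filter_upwards [hT] with t ht
    exact (((hasDerivAt_cos t).const_mul a).add ((hasDerivAt_sin t).const_mul b)).sub
      (hasDerivAt_circleDeriv1 hU hf (hγ t) (hA t) (hB t) ht) |>.congr_deriv (by ring)
  · filter_upwards [hT] with t ht
    exact (((hasDerivAt_cos t).const_mul b).sub ((hasDerivAt_sin t).const_mul a)).sub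
      (hasDerivAt_circleDeriv2 hU hf (hγ t) (hA t) (hB t) ht) |>.congr_deriv (by ring)
  · refine ((((hasDerivAt_cos 0).const_mul a).neg.sub ((hasDerivAt_sin 0).const_mul b)).sub
      (hasDerivAt_circleDeriv3 hU hf (hγ 0) (hA 0) (hB 0) hT.self_of_nhds)).congr_deriv ?_
    simp [hγ0, A, B]
    ring
  · simp [hz]
  · simp [hγ0, A, B, ha]
  · simp [hγ0, A, B, hb]
  · simp [hγ0, A, B]
    linarith

theorem stmt_10_general (f : ℝ → ℝ → ℝ) (x y z a b u v : ℝ)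
    (hf : ContDiffAt ℝ 4 (fun p : ℝ × ℝ => f p.1 p.2) (x, y))
    (hz : z = f x y)
    (ha : a = pdx f x y * v - pdy f x y * u)
    (hb : b = pdx f x y * u + pdy f x y * v
        + pdx (pdx f) x y * v ^ 2 - 2 * pdy (pdx f) x y * u * v + pdy (pdy f) x y * u ^ 2)
    (h3 : pdx (pdx (pdx f)) x y * v ^ 3 - 3 * pdy (pdx (pdx f)) x y * v ^ 2 * u
        + 3 * pdy (pdy (pdx f)) x y * v * u ^ 2 - pdy (pdy (pdy f)) x y * u ^ 3
        + 3 * (pdx (pdx f) x y - pdy (pdy f) x y) * u * v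
        + 3 * pdy (pdx f) x y * (v ^ 2 - u ^ 2) = 0) :
    Tendsto (fun t : ℝ =>
        (z + a * Real.sin t + b * (1 - Real.cos t)
          - f (x + v * Real.sin t + u * (1 - Real.cos t))
              (y - u * Real.sin t + v * (1 - Real.cos t))) / t ^ 4)
      (nhdsWithin 0 {(0 : ℝ)}ᶜ) (nhds 0)
    ↔ pdx (pdx (pdx (pdx f))) x y * v ^ 4
        - 4 * pdy (pdx (pdx (pdx f))) x y * v ^ 3 * u
        + 6 * pdy (pdy (pdx (pdx f))) x y * v ^ 2 * u ^ 2
        - 4 * pdy (pdy (pdy (pdx f))) x y * v * u ^ 3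
        + pdy (pdy (pdy (pdy f))) x y * u ^ 4
        + 6 * u * v ^ 2 * pdx (pdx (pdx f)) x y
        + 6 * v * (v ^ 2 - 2 * u ^ 2) * pdy (pdx (pdx f)) x y
        + 6 * u * (u ^ 2 - 2 * v ^ 2) * pdy (pdy (pdx f)) x y
        + 6 * u ^ 2 * v * pdy (pdy (pdy f)) x y
        + 3 * (u ^ 2 - v ^ 2) * (pdx (pdx f) x y - pdy (pdy f) x y)
        + 12 * u * v * pdy (pdx f) x y = 0 := by
  obtain ⟨V, hV, hfV⟩ := hf.contDiffOn le_rfl (by norm_num)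
  obtain ⟨U, hUV, hU, hxy⟩ := mem_nhds_iff.1 hV
  have hlim := tendsto_conic_contact_div_pow_four (a := a) (b := b) (u := u) (v := v) hU
    (by exact_mod_cast hfV.mono hUV) hxy hz
    (by simp only [circleDeriv1, pd_apply, iterate_succ_apply', iterate_zero_apply]
        linear_combination ha)
    (by simp only [circleDeriv2, pd_apply, iterate_succ_apply', iterate_zero_apply]
        linear_combination hb)
    (by simp only [circleDeriv3, pd_apply, iterate_succ_apply', iterate_zero_apply]
        linear_combination -h3 - ha)
  simp only [circleDeriv4, pd_apply, iterate_succ_apply', iterate_zero_apply] at hlim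
  constructor
  · intro h
    linear_combination -24 * tendsto_nhds_unique hlim h - hb
  · intro hE
    convert hlim using 2
    linear_combination (hE + hb) / 24

/-- given third order contact conditions, the conic has fourth order
contact with the graph of `f` at `t = 0` iff the fourth order equation holds. -/
theorem stmt_10 (f : ℝ → ℝ → ℝ) (x y z a b u v : ℝ)
    (hf : ContDiffAt ℝ 4 (fun p : ℝ × ℝ => f p.1 p.2) (x, y))
    (huv : (u, v) ≠ ((0 : ℝ), (0 : ℝ)))
    (hz : z = f x y)
    (ha : a = pdx f x y * v - pdy f x y * u)
    (hb : b = pdx f x y * u + pdy f x y * v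
        + pdx (pdx f) x y * v ^ 2 - 2 * pdy (pdx f) x y * u * v + pdy (pdy f) x y * u ^ 2)
    (h3 : pdx (pdx (pdx f)) x y * v ^ 3 - 3 * pdy (pdx (pdx f)) x y * v ^ 2 * u
        + 3 * pdy (pdy (pdx f)) x y * v * u ^ 2 - pdy (pdy (pdy f)) x y * u ^ 3
        + 3 * (pdx (pdx f) x y - pdy (pdy f) x y) * u * v
        + 3 * pdy (pdx f) x y * (v ^ 2 - u ^ 2) = 0) :
    Tendsto (fun t : ℝ =>
        (z + a * Real.sin t + b * (1 - Real.cos t)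
          - f (x + v * Real.sin t + u * (1 - Real.cos t))
              (y - u * Real.sin t + v * (1 - Real.cos t))) / t ^ 4)
      (nhdsWithin 0 {(0 : ℝ)}ᶜ) (nhds 0)
    ↔ pdx (pdx (pdx (pdx f))) x y * v ^ 4
        - 4 * pdy (pdx (pdx (pdx f))) x y * v ^ 3 * u
        + 6 * pdy (pdy (pdx (pdx f))) x y * v ^ 2 * u ^ 2
        - 4 * pdy (pdy (pdy (pdx f))) x y * v * u ^ 3
        + pdy (pdy (pdy (pdy f))) x y * u ^ 4
        + 6 * u * v ^ 2 * pdx (pdx (pdx f)) x y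
        + 6 * v * (v ^ 2 - 2 * u ^ 2) * pdy (pdx (pdx f)) x y
        + 6 * u * (u ^ 2 - 2 * v ^ 2) * pdy (pdy (pdx f)) x y
        + 6 * u ^ 2 * v * pdy (pdy (pdy f)) x y
        + 3 * (u ^ 2 - v ^ 2) * (pdx (pdx f) x y - pdy (pdy f) x y)
        + 12 * u * v * pdy (pdx f) x y = 0 :=
  stmt_10_general f x y z a b u v hf hz ha hb h3
end

section
/- Let f be a C¹ function and suppose the tangent planes to the graph of f along an arc of the conic t ↦ (x + v sin t + u(1-cos t), y - u sin t + v(1-cos t), z + a sin t + b(1-cos t)), t ∈ (-ε,ε), all pass through the common point (x+u, y+v, z₀), where the conic is contained in the graph, z = f(x,y), a = f_x(x,y)v - f_y(x,y)u, and (u,v) ≠ (0,0). Then (f_xx - f_yy) u v + f_xy (v² - u²) = 0 at (x,y) (assuming f is C²). -/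
/-!
Along the arc, the height above `(x + u, y + v)` of the tangent plane at `γ t` is the constant
`z₀`. Differentiating at `t = 0`, the first-order terms cancel and what is left is
`D²f(x, y) (γ' 0) (u, v) = 0` with `γ' 0 = (v, -u)`: the directions `(v, -u)` and `(u, v)` are
conjugate for the Hessian. Expanding this in coordinates and using the symmetry of the mixed
partials gives the identity.
-/

open Real Set

open Filter Topology Function

section NormedSpace

variable {E : Type*} [NormedAddCommGroup E] [NormedSpace ℝ E]

theorem ContDiffAt.eventually_differentiableAt_of_two {F : E → ℝ} {p : E}
    (hF : ContDiffAt ℝ 2 F p) : ∀ᶠ q in 𝓝 p, DifferentiableAt ℝ F q :=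
  (hF.eventually (by simp)).mono fun _ hq => hq.differentiableAt (by simp)

theorem ContDiffAt.hasFDerivAt_fderiv_of_two {F : E → ℝ} {p : E} (hF : ContDiffAt ℝ 2 F p) :
    HasFDerivAt (fderiv ℝ F) (fderiv ℝ (fderiv ℝ F) p) p :=
  ((hF.fderiv_right (m := 1) (by norm_num)).differentiableAt one_ne_zero).hasFDerivAt

theorem hasFDerivAt_fderiv_apply_of_eventuallyEq {F g : E → ℝ} {p : E}
    (hF : ContDiffAt ℝ 2 F p) (w : E) (hg : g =ᶠ[𝓝 p] fun q => fderiv ℝ F q w) :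
    HasFDerivAt g ((fderiv ℝ (fderiv ℝ F) p).flip w) p := by
  refine ((hF.hasFDerivAt_fderiv_of_two.clm_apply (hasFDerivAt_const w p)).congr_of_eventuallyEq
    hg).congr_fderiv ?_
  ext v
  simp

noncomputable def tangentValue (F : E → ℝ) (q Q : E) : ℝ := F q + fderiv ℝ F q (Q - q)

theorem hasFDerivAt_tangentValue {F : E → ℝ} {F'' : E →L[ℝ] E →L[ℝ] ℝ} {p : E}
    (hF : DifferentiableAt ℝ F p) (hF' : HasFDerivAt (fderiv ℝ F) F'' p) (Q : E) :
    HasFDerivAt (fun q => tangentValue F q Q) (F''.flip (Q - p)) p := by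
  refine (hF.hasFDerivAt.add
    (hF'.clm_apply ((hasFDerivAt_const Q p).sub (hasFDerivAt_id p)))).congr_fderiv ?_
  ext w
  simp

/-- If the tangent hyperplanes of the graph of `F` along a curve `γ` all pass through one point
above `Q`, then `Q - γ 0` is conjugate to the velocity `γ' 0` for the Hessian of `F`. -/
theorem second_deriv_apply_eq_zero_of_tangentValue_eventually_const {F : E → ℝ}
    {F'' : E →L[ℝ] E →L[ℝ] ℝ} {γ : ℝ → E} {p w Q : E} {c : ℝ} (hγ : HasDerivAt γ w 0)
    (hγ0 : γ 0 = p) (hF : DifferentiableAt ℝ F p) (hF' : HasFDerivAt (fderiv ℝ F) F'' p)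
    (hconst : ∀ᶠ t in 𝓝 0, tangentValue F (γ t) Q = c) :
    F'' w (Q - p) = 0 := by
  have hderiv := (hasFDerivAt_tangentValue hF hF' Q).comp_hasDerivAt_of_eq 0 hγ hγ0.symm
  have hconst' : HasDerivAt (fun t => tangentValue F (γ t) Q) 0 0 :=
    (hasDerivAt_const 0 c).congr_of_eventuallyEq hconst
  simpa using hderiv.unique hconst'

end NormedSpace

theorem ContinuousLinearMap.apply_prod {M : Type*} [AddCommGroup M] [Module ℝ M]
    [TopologicalSpace M] (L : ℝ × ℝ →L[ℝ] M) (a b : ℝ) :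
    L (a, b) = a • L (1, 0) + b • L (0, 1) := by
  rw [← map_smul, ← map_smul, ← map_add]
  simp

theorem ContinuousLinearMap.apply_prod_apply_prod (B : ℝ × ℝ →L[ℝ] ℝ × ℝ →L[ℝ] ℝ)
    (a b c d : ℝ) :
    B (a, b) (c, d) = a * c * B (1, 0) (1, 0) + a * d * B (1, 0) (0, 1)
      + b * c * B (0, 1) (1, 0) + b * d * B (0, 1) (0, 1) := by
  simp only [B.apply_prod a b, add_apply, smul_apply, ContinuousLinearMap.apply_prod _ c d,
    smul_eq_mul]
  ring

section PartialDerivatives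

variable {f : ℝ → ℝ → ℝ} {L : ℝ × ℝ →L[ℝ] ℝ} {p : ℝ × ℝ}

theorem pdx_eq_of_hasFDerivAt (h : HasFDerivAt (uncurry f) L p) : pdx f p.1 p.2 = L (1, 0) := by
  exact (h.comp_hasDerivAt p.1 ((hasDerivAt_id p.1).prodMk (hasDerivAt_const p.1 p.2))).deriv

theorem pdy_eq_of_hasFDerivAt (h : HasFDerivAt (uncurry f) L p) : pdy f p.1 p.2 = L (0, 1) := by
  exact (h.comp_hasDerivAt p.2 ((hasDerivAt_const p.2 p.1).prodMk (hasDerivAt_id p.2))).deriv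

theorem fderiv_uncurry_apply (h : DifferentiableAt ℝ (uncurry f) p) (w : ℝ × ℝ) :
    fderiv ℝ (uncurry f) p w = pdx f p.1 p.2 * w.1 + pdy f p.1 p.2 * w.2 := by
  rw [pdx_eq_of_hasFDerivAt h.hasFDerivAt, pdy_eq_of_hasFDerivAt h.hasFDerivAt,
    ContinuousLinearMap.apply_prod, smul_eq_mul, smul_eq_mul, mul_comm, mul_comm w.2]

theorem tangentValue_uncurry (h : DifferentiableAt ℝ (uncurry f) p) (Q : ℝ × ℝ) :
    tangentValue (uncurry f) p Q
      = f p.1 p.2 + pdx f p.1 p.2 * (Q.1 - p.1) + pdy f p.1 p.2 * (Q.2 - p.2) := by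
  rw [tangentValue, fderiv_uncurry_apply h, add_assoc]
  rfl

theorem hasFDerivAt_uncurry_pdx (hf : ContDiffAt ℝ 2 (uncurry f) p) :
    HasFDerivAt (uncurry (pdx f)) ((fderiv ℝ (fderiv ℝ (uncurry f)) p).flip (1, 0)) p := by
  refine hasFDerivAt_fderiv_apply_of_eventuallyEq hf _ ?_
  filter_upwards [hf.eventually_differentiableAt_of_two] with q hq
  exact pdx_eq_of_hasFDerivAt hq.hasFDerivAt

theorem hasFDerivAt_uncurry_pdy (hf : ContDiffAt ℝ 2 (uncurry f) p) :
    HasFDerivAt (uncurry (pdy f)) ((fderiv ℝ (fderiv ℝ (uncurry f)) p).flip (0, 1)) p := by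
  refine hasFDerivAt_fderiv_apply_of_eventuallyEq hf _ ?_
  filter_upwards [hf.eventually_differentiableAt_of_two] with q hq
  exact pdy_eq_of_hasFDerivAt hq.hasFDerivAt

end PartialDerivatives

theorem hasDerivAt_conic_s18 (x y u v : ℝ) :
    HasDerivAt (fun t => (x + v * sin t + u * (1 - cos t), y - u * sin t + v * (1 - cos t)))
      (v, -u) 0 := by
  have hX := ((hasDerivAt_sin 0).const_mul v).const_add x |>.add
    (((hasDerivAt_cos 0).const_sub 1).const_mul u)
  have hY := ((hasDerivAt_sin 0).const_mul u).const_sub y |>.add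
    (((hasDerivAt_cos 0).const_sub 1).const_mul v)
  convert hX.prodMk hY using 2 <;> simp

theorem stmt_18_general (f : ℝ → ℝ → ℝ) (x y u v z₀ ε : ℝ) (hε : 0 < ε)
    (hf : ContDiffAt ℝ 2 (fun p : ℝ × ℝ => f p.1 p.2) (x, y))
    (htang : ∀ t ∈ Ioo (-ε) ε,
      z₀ - f (x + v * Real.sin t + u * (1 - Real.cos t))
            (y - u * Real.sin t + v * (1 - Real.cos t))
        = pdx f (x + v * Real.sin t + u * (1 - Real.cos t))
              (y - u * Real.sin t + v * (1 - Real.cos t))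
            * ((x + u) - (x + v * Real.sin t + u * (1 - Real.cos t)))
          + pdy f (x + v * Real.sin t + u * (1 - Real.cos t))
              (y - u * Real.sin t + v * (1 - Real.cos t))
            * ((y + v) - (y - u * Real.sin t + v * (1 - Real.cos t)))) :
    (pdx (pdx f) x y - pdy (pdy f) x y) * u * v
      + pdy (pdx f) x y * (v ^ 2 - u ^ 2) = 0 := by
  replace hf : ContDiffAt ℝ 2 (uncurry f) (x, y) := hf
  set B := fderiv ℝ (fderiv ℝ (uncurry f)) (x, y)
  have hγ := hasDerivAt_conic_s18 x y u v
  have hγ0 : (x + v * sin 0 + u * (1 - cos 0), y - u * sin 0 + v * (1 - cos 0)) = (x, y) := by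
    simp
  have hdiff := hf.eventually_differentiableAt_of_two
  have hconst : ∀ᶠ t in 𝓝 0, tangentValue (uncurry f)
      (x + v * sin t + u * (1 - cos t), y - u * sin t + v * (1 - cos t)) (x + u, y + v) = z₀ := by
    filter_upwards [Ioo_mem_nhds (neg_neg_of_pos hε) hε,
      hγ.continuousAt.tendsto.eventually (hγ0 ▸ hdiff)] with t ht hdt
    rw [tangentValue_uncurry hdt]
    linarith [htang t ht]
  have hconj : B (v, -u) (u, v) = 0 := by
    simpa using second_deriv_apply_eq_zero_of_tangentValue_eventually_const hγ hγ0
      hdiff.self_of_nhds hf.hasFDerivAt_fderiv_of_two hconst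
  have hsymm : B (1, 0) (0, 1) = B (0, 1) (1, 0) := hf.isSymmSndFDerivAt (by simp) _ _
  rw [B.apply_prod_apply_prod] at hconj
  rw [pdx_eq_of_hasFDerivAt (hasFDerivAt_uncurry_pdx hf),
    pdy_eq_of_hasFDerivAt (hasFDerivAt_uncurry_pdx hf),
    pdy_eq_of_hasFDerivAt (hasFDerivAt_uncurry_pdy hf)]
  simp only [ContinuousLinearMap.flip_apply]
  linear_combination hconj - v ^ 2 * hsymm

/-- if the conic lies on the graph of `f` and the tangent planes along
the conic arc all pass through the common point `(x+u, y+v, z₀)`, then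
`(f_xx - f_yy) uv + f_xy (v² - u²) = 0` at `(x,y)`. -/
theorem stmt_18 (f : ℝ → ℝ → ℝ) (x y z a b u v z₀ ε : ℝ) (hε : 0 < ε)
    (hf : ContDiffAt ℝ 2 (fun p : ℝ × ℝ => f p.1 p.2) (x, y))
    (huv : (u, v) ≠ ((0 : ℝ), (0 : ℝ)))
    (hz : z = f x y)
    (ha : a = pdx f x y * v - pdy f x y * u)
    (hgraph : ∀ t ∈ Ioo (-ε) ε,
      z + a * Real.sin t + b * (1 - Real.cos t)
        = f (x + v * Real.sin t + u * (1 - Real.cos t))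
            (y - u * Real.sin t + v * (1 - Real.cos t)))
    (htang : ∀ t ∈ Ioo (-ε) ε,
      z₀ - f (x + v * Real.sin t + u * (1 - Real.cos t))
            (y - u * Real.sin t + v * (1 - Real.cos t))
        = pdx f (x + v * Real.sin t + u * (1 - Real.cos t))
              (y - u * Real.sin t + v * (1 - Real.cos t))
            * ((x + u) - (x + v * Real.sin t + u * (1 - Real.cos t)))
          + pdy f (x + v * Real.sin t + u * (1 - Real.cos t))
              (y - u * Real.sin t + v * (1 - Real.cos t))
            * ((y + v) - (y - u * Real.sin t + v * (1 - Real.cos t)))) :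
    (pdx (pdx f) x y - pdy (pdy f) x y) * u * v
      + pdy (pdx f) x y * (v ^ 2 - u ^ 2) = 0 :=
  stmt_18_general f x y u v z₀ ε hε hf htang
end
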